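/- Let n ≥ 4 be an integer, fix vertices x, y of the cycle graph C_n that are not adjacent in C_n, and let L and R denote the two connected components of C_n − x − y. Let ℓ_1, …, ℓ_s be distinct vertices of L and r_1, …, r_s be distinct vertices of R, and for each i ∈ {1,…,s} let P_i be a path in C_n from ℓ_i to r_i that contains the vertex x but does not contain the vertex y. Then ∑_{i=1}^s |V(P_i)| ≥ s² + 2s, where |V(P_i)| denotes the number of vertices of the path P_i. -/

import Mathlib

/-!
Split `P i` at `x` into a path from `ℓ i` to `x` of length `q i` and a path from `x` to `r i` of
length `d i`. A path in `C_n` runs around the cycle in one direction `ε i = ±1`, so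
`ℓ i = x - q i * ε i` and `r i = x + d i * ε i`. The neighbours `x - ε i` and `x + ε i` of `x` on
`P i` lie in `L` and in `R` respectively, so all paths run in the same direction: otherwise
`x - ε i = x + ε j` would lie in both `L` and `R`. Hence `q` and `d` are injective maps into the positive integers, each summing to
at least `s(s+1)/2`, and `∑ |V(P i)| = ∑ (q i + d i + 1) ≥ s² + 2s`.
-/

open SimpleGraph Finset

/-- The cycle graph `C_n` with the vertices `x` and `y` deleted (as a graph on
`Fin n` in which `x` and `y` have become isolated). -/
def deletedCycle (n : ℕ) (x y : Fin n) : SimpleGraph (Fin n) where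
  Adj u v := (SimpleGraph.cycleGraph n).Adj u v ∧ u ≠ x ∧ u ≠ y ∧ v ≠ x ∧ v ≠ y
  symm := by constructor; rintro u v ⟨h, h1, h2, h3, h4⟩; exact ⟨h.symm, h3, h4, h1, h2⟩
  loopless := by constructor; rintro u ⟨h, -⟩; exact h.ne rfl

open scoped Fin.CommRing

theorem card_mul_card_add_one_le_two_mul_sum {ι : Type*} [Fintype ι] {f : ι → ℕ}
    (hf : Function.Injective f) (hpos : ∀ i, 0 < f i) :
    Fintype.card ι * (Fintype.card ι + 1) ≤ 2 * ∑ i, f i := by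
  have hf' : Function.Injective fun i ↦ (f i : ℤ) := Nat.cast_injective.comp hf
  have key := sum_range_le_sum (s := univ.image fun i ↦ (f i : ℤ)) (c := 1)
    (by simpa [Nat.one_le_iff_ne_zero, ← Nat.pos_iff_ne_zero] using hpos)
  rw [sum_image fun i _ j _ h ↦ hf' h, card_image_of_injective _ hf', card_univ] at key
  have gauss := sum_range_id_mul_two (Fintype.card ι + 1)
  rw [sum_range_succ'] at gauss
  zify at gauss ⊢
  push_cast at gauss
  simp only [add_comm (1 : ℤ)] at key
  linarith

theorem sq_add_two_mul_le_sum_add_add_one {s : ℕ} {q d : Fin s → ℕ}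
    (hq : Function.Injective q) (hd : Function.Injective d) (hq0 : ∀ i, 0 < q i)
    (hd0 : ∀ i, 0 < d i) : s ^ 2 + 2 * s ≤ ∑ i, (q i + d i + 1) := by
  have hsq := card_mul_card_add_one_le_two_mul_sum hq hq0
  have hsd := card_mul_card_add_one_le_two_mul_sum hd hd0
  rw [Fintype.card_fin] at hsq hsd
  rw [sum_add_distrib, sum_add_distrib, sum_const, card_univ, Fintype.card_fin, smul_eq_mul]
  nlinarith

lemma eq_neg_of_ne_of_eq_one_or_eq_neg_one {R : Type*} [Ring R] {a b : R}
    (ha : a = 1 ∨ a = -1) (hb : b = 1 ∨ b = -1) (hab : a ≠ b) : a = -b := by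
  rcases ha with rfl | rfl <;> rcases hb with rfl | rfl <;> simp_all

lemma eq_of_ne_of_ne_of_eq_one_or_eq_neg_one {R : Type*} [Ring R] {a b c : R}
    (ha : a = 1 ∨ a = -1) (hb : b = 1 ∨ b = -1) (hc : c = 1 ∨ c = -1) (hac : a ≠ c)
    (hbc : b ≠ c) : a = b := by
  rw [eq_neg_of_ne_of_eq_one_or_eq_neg_one ha hc hac,
    eq_neg_of_ne_of_eq_one_or_eq_neg_one hb hc hbc]

namespace SimpleGraph

variable {n : ℕ}

lemma exists_eq_add_of_cycleGraph_adj [NeZero n] {u v : Fin n} (h : (cycleGraph n).Adj u v) :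
    ∃ ε : Fin n, (ε = 1 ∨ ε = -1) ∧ v = u + ε := by
  have eq_one {w : Fin n} (hw : w.val = 1) : w = 1 :=
    Fin.ext (by rw [hw, Fin.val_one', Nat.mod_eq_of_lt (hw ▸ w.isLt)])
  rcases cycleGraph_adj'.1 h with h | h
  · exact ⟨-1, .inr rfl, by rw [← sub_eq_add_neg, ← eq_one h, sub_sub_cancel]⟩
  · exact ⟨1, .inl rfl, by rw [← eq_one h, add_sub_cancel]⟩

namespace Walk

lemma IsPath.exists_getVert_eq_add_mul [NeZero n] {u v : Fin n} {W : (cycleGraph n).Walk u v}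
    (hW : W.IsPath) :
    ∃ ε : Fin n, (ε = 1 ∨ ε = -1) ∧ ∀ t ≤ W.length, W.getVert t = u + t * ε := by
  induction W with
  | nil => exact ⟨1, .inl rfl, fun t ht ↦ by simp_all⟩
  | @cons a b c h W ih =>
    obtain ⟨hW, ha⟩ := (cons_isPath_iff h W).1 hW
    obtain ⟨η, hη, rfl⟩ := exists_eq_add_of_cycleGraph_adj h
    refine ⟨η, hη, fun t ht ↦ ?_⟩
    rcases t with _ | t
    · simp
    rw [getVert_cons_succ]
    rcases t.eq_zero_or_pos with rfl | ht0
    · simp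
    obtain ⟨ε, hε, hW⟩ := ih hW
    -- the second step of the path cannot return to `a`
    have hεη : ε = η := by
      by_contra hne
      refine ha ?_
      have := W.getVert_mem_support 1
      rwa [hW 1 (by simp at ht; omega), eq_neg_of_ne_of_eq_one_or_eq_neg_one hε hη hne,
        Nat.cast_one, one_mul, add_neg_cancel_right] at this
    rw [hW t (by simp at ht; omega), hεη]
    push_cast
    ring

variable {x y : Fin n} {S S' : Set (Fin n)}

lemma IsPath.penultimate_mem (hxS : x ∉ S) (hcover : ∀ u, u ≠ x → u ≠ y → u ∈ S ∨ u ∈ S')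
    (hsep : ∀ u ∈ S, ∀ v ∈ S', ¬ (deletedCycle n x y).Reachable u v)
    {ℓ : Fin n} (hℓ : ℓ ∈ S) {W : (cycleGraph n).Walk ℓ x} (hW : W.IsPath)
    (hy : y ∉ W.support) : W.penultimate ∈ S := by
  induction W with
  | nil => exact hℓ
  | @cons a b c h W ih =>
    cases W with
    | nil => exact hℓ
    | cons h' W' =>
      rw [penultimate_cons_cons]
      obtain ⟨hW, ha⟩ := (cons_isPath_iff _ _).1 hW
      have hbc : b ≠ c := fun hbc ↦ ((cons_isPath_iff _ _).1 hW).2 (hbc ▸ W'.end_mem_support)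
      have hadj : (deletedCycle n c y).Adj a b :=
        ⟨h, fun hac ↦ hxS (hac ▸ hℓ), fun hay ↦ hy (hay ▸ start_mem_support _),
          hbc, fun hby ↦ hy (hby ▸ by simp)⟩
      have hb : b ∈ S := (hcover b hadj.2.2.2.1 hadj.2.2.2.2).resolve_right
        fun hb ↦ hsep a hℓ b hb hadj.reachable
      exact ih hxS hcover hsep hb hW fun hy' ↦ hy (List.mem_cons_of_mem _ hy')

lemma IsPath.exists_start_eq_sub_mul [NeZero n] (hxS : x ∉ S)
    (hcover : ∀ u, u ≠ x → u ≠ y → u ∈ S ∨ u ∈ S')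
    (hsep : ∀ u ∈ S, ∀ v ∈ S', ¬ (deletedCycle n x y).Reachable u v)
    {ℓ : Fin n} (hℓ : ℓ ∈ S) {W : (cycleGraph n).Walk ℓ x} (hW : W.IsPath)
    (hy : y ∉ W.support) :
    0 < W.length ∧ ∃ ε : Fin n, (ε = 1 ∨ ε = -1) ∧ ℓ = x - W.length * ε ∧ x - ε ∈ S := by
  have hpos : 0 < W.length := Nat.pos_of_ne_zero fun h0 ↦ hxS (W.eq_of_length_eq_zero h0 ▸ hℓ)
  obtain ⟨ε, hε, hget⟩ := hW.exists_getVert_eq_add_mul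
  have hx : x = ℓ + W.length * ε := by rw [← hget _ le_rfl, W.getVert_length]
  refine ⟨hpos, ε, hε, by linear_combination -hx, ?_⟩
  convert hW.penultimate_mem hxS hcover hsep hℓ hy using 1
  rw [penultimate, hget _ (Nat.sub_le _ _), Nat.cast_sub hpos, Nat.cast_one]
  linear_combination hx

end Walk

end SimpleGraph

theorem pathSum_through_x_general (n : ℕ) (x y : Fin n) (L R : Set (Fin n)) (hdisj : Disjoint L R)
    (hxL : x ∉ L) (hxR : x ∉ R)
    (hcover : ∀ u : Fin n, u ≠ x → u ≠ y → u ∈ L ∨ u ∈ R)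
    (hLR : ∀ u ∈ L, ∀ v ∈ R, ¬ (deletedCycle n x y).Reachable u v)
    (s : ℕ) (ℓ r : Fin s → Fin n)
    (hℓL : ∀ i, ℓ i ∈ L) (hrR : ∀ i, r i ∈ R)
    (hℓinj : Function.Injective ℓ) (hrinj : Function.Injective r)
    (P : ∀ i : Fin s, (SimpleGraph.cycleGraph n).Walk (ℓ i) (r i))
    (hP : ∀ i, (P i).IsPath)
    (hPx : ∀ i, x ∈ (P i).support) (hPy : ∀ i, y ∉ (P i).support) :
    s ^ 2 + 2 * s ≤ ∑ i : Fin s, (P i).support.length := by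
  have : NeZero n := ⟨x.pos.ne'⟩
  choose hq ε hε hℓε hLε using fun i ↦ ((hP i).takeUntil (hPx i)).exists_start_eq_sub_mul
    hxL hcover hLR (hℓL i) fun hy ↦ hPy i ((P i).support_takeUntil_subset_support _ hy)
  choose hd δ hδ hrδ hRδ using fun i ↦ ((hP i).dropUntil (hPx i)).reverse.exists_start_eq_sub_mul
    hxR (fun u hux huy ↦ (hcover u hux huy).symm) (fun u hu v hv h ↦ hLR v hv u hu h.symm)
    (hrR i) (by simpa using fun hy ↦ hPy i ((P i).support_dropUntil_subset_support _ hy))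
  have hεδ (i j : Fin s) : ε i ≠ δ j := fun h ↦
    Set.disjoint_left.1 hdisj (hLε i) (h ▸ hRδ j)
  have hε_eq (i j : Fin s) : ε i = ε j :=
    eq_of_ne_of_ne_of_eq_one_or_eq_neg_one (hε i) (hε j) (hδ i) (hεδ i i) (hεδ j i)
  have hδ_eq (i j : Fin s) : δ i = δ j :=
    eq_of_ne_of_ne_of_eq_one_or_eq_neg_one (hδ i) (hδ j) (hε i) (hεδ i i).symm (hεδ i j).symm
  calc s ^ 2 + 2 * s ≤ ∑ i, (((P i).takeUntil x (hPx i)).length +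
        ((P i).dropUntil x (hPx i)).reverse.length + 1) :=
      sq_add_two_mul_le_sum_add_add_one
        (fun i j hij ↦ hℓinj <| by rw [hℓε i, hℓε j, hij, hε_eq i j])
        (fun i j hij ↦ hrinj <| by rw [hrδ i, hrδ j, hij, hδ_eq i j]) hq hd
    _ = ∑ i, (P i).support.length := sum_congr rfl fun i _ ↦ by
      rw [Walk.length_support, Walk.length_reverse, ← Walk.length_append, (P i).take_spec]

/-- Let `x,y` be nonadjacent vertices of `C_n` (`n ≥ 4`) and
`L,R` the two connected components of `C_n - x - y`. If `ℓ₁,…,ℓ_s ∈ L` are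
distinct, `r₁,…,r_s ∈ R` are distinct, and each `Pᵢ` is a path in `C_n` from
`ℓᵢ` to `rᵢ` through `x` avoiding `y`, then `∑ |V(Pᵢ)| ≥ s² + 2s`. -/
theorem pathSum_through_x (n : ℕ) (hn : 4 ≤ n)
    (x y : Fin n) (hxy : x ≠ y) (hnadj : ¬ (SimpleGraph.cycleGraph n).Adj x y)
    (L R : Set (Fin n))
    (hLne : L.Nonempty) (hRne : R.Nonempty) (hdisj : Disjoint L R)
    (hxL : x ∉ L) (hyL : y ∉ L) (hxR : x ∉ R) (hyR : y ∉ R)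
    (hcover : ∀ u : Fin n, u ≠ x → u ≠ y → u ∈ L ∨ u ∈ R)
    (hLconn : ∀ u ∈ L, ∀ v ∈ L, (deletedCycle n x y).Reachable u v)
    (hRconn : ∀ u ∈ R, ∀ v ∈ R, (deletedCycle n x y).Reachable u v)
    (hLR : ∀ u ∈ L, ∀ v ∈ R, ¬ (deletedCycle n x y).Reachable u v)
    (s : ℕ) (ℓ r : Fin s → Fin n)
    (hℓL : ∀ i, ℓ i ∈ L) (hrR : ∀ i, r i ∈ R)
    (hℓinj : Function.Injective ℓ) (hrinj : Function.Injective r)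
    (P : ∀ i : Fin s, (SimpleGraph.cycleGraph n).Walk (ℓ i) (r i))
    (hP : ∀ i, (P i).IsPath)
    (hPx : ∀ i, x ∈ (P i).support) (hPy : ∀ i, y ∉ (P i).support) :
    s ^ 2 + 2 * s ≤ ∑ i : Fin s, (P i).support.length :=
  pathSum_through_x_general n x y L R hdisj hxL hxR hcover hLR s ℓ r hℓL hrR hℓinj hrinj P hP hPx
    hPy
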